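/- arXiv:0709.2514 — 4 statements merged into one kernel-verified Lean document; each statement's English description precedes it below -/
import Mathlib

section
/- Let J be a symmetric real 3×3 matrix and define the nonstandard moment of inertia matrix J_d = (1/2) tr(J) I₃ − J. Then for every vector Ω in ℝ³, Ω̂ J_d + J_d Ω̂ = (J Ω)^. -/
open Matrix

/-- The hat map `^ : ℝ³ → 𝔰𝔬(3)`. -/
def hat (x : Fin 3 → ℝ) : Matrix (Fin 3) (Fin 3) ℝ :=
  !![0, -x 2, x 1; x 2, 0, -x 0; -x 1, x 0, 0]

theorem hat_mul_add_transpose_mul_hat (A : Matrix (Fin 3) (Fin 3) ℝ) (x : Fin 3 → ℝ) :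
    hat x * A + Aᵀ * hat x = hat ((A.trace • (1 : Matrix (Fin 3) (Fin 3) ℝ) - A) *ᵥ x) := by
  ext i j
  fin_cases i <;> fin_cases j <;>
    simp [hat, mul_apply, trace, Fin.sum_univ_three, mulVec, vecMul, dotProduct, one_apply] <;> ring

/-- For a symmetric `J` and `J_d = (1/2) tr(J) I₃ − J`, one has
`Ω̂ J_d + J_d Ω̂ = (J Ω)^` for every `Ω ∈ ℝ³`. -/
theorem hat_nonstandard_inertia (J : Matrix (Fin 3) (Fin 3) ℝ) (hJ : Jᵀ = J)
    (Ω : Fin 3 → ℝ) :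
    hat Ω * (((1 : ℝ)/2 * J.trace) • (1 : Matrix (Fin 3) (Fin 3) ℝ) - J)
      + (((1 : ℝ)/2 * J.trace) • (1 : Matrix (Fin 3) (Fin 3) ℝ) - J) * hat Ω
      = hat (J *ᵥ Ω) := by
  set Jd := ((1 : ℝ)/2 * J.trace) • (1 : Matrix (Fin 3) (Fin 3) ℝ) - J
  have hJd : Jdᵀ = Jd := by simp only [Jd, transpose_sub, transpose_smul, transpose_one, hJ]
  have htrace : Jd.trace = 1/2 * J.trace := by
    simp only [Jd, trace_sub, trace_smul, trace_one, Fintype.card_fin, smul_eq_mul]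
    push_cast
    ring
  calc hat Ω * Jd + Jd * hat Ω = hat Ω * Jd + Jdᵀ * hat Ω := by rw [hJd]
    _ = hat ((Jd.trace • 1 - Jd) *ᵥ Ω) := hat_mul_add_transpose_mul_hat Jd Ω
    _ = hat (J *ᵥ Ω) := by rw [htrace, sub_sub_cancel]
end

section
/- Let Ω : [0,T] → ℝ³ be continuous, R : [0,T] → SO(3) be differentiable with Ṙ(t) = R(t) Ω̂(t), and η : [0,T] → ℝ³ be differentiable. Define the varied curve R^ε(t) = R(t) · exp(ε η̂(t)). Then for each t ∈ [0,T], the infinitesimal variation of Rᵀ Ṙ satisfies (∂/∂ε)|_{ε=0} [ (R^ε(t))ᵀ (∂/∂t) R^ε(t) ] = ( η̇(t) + Ω(t) × η(t) )^. -/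
/-!
Put `A = η̂(t)`. Since `Rᵀ R = 1` and `exp(ε A)ᵀ = exp(-ε A)`, the body velocity of the varied
curve is `exp(-ε A) Ω̂ exp(ε A) + exp(-ε A) ∂ₜ exp(ε η̂)`. The first term has `ε`-derivative
`[Ω̂, A] = (Ω × η)^` at `0`, the hat map being a Lie algebra isomorphism. By the chain rule the
second is `ε` times the continuous function `exp(-ε A) · (D exp)(ε A) η̂'`, whose value at `0` is
`η̂'`; so its `ε`-derivative at `0` is `η̂'`, with no mixed partial derivatives needed.
-/

open Matrix

attribute [local instance] Matrix.normedAddCommGroup Matrix.normedSpace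

open NormedSpace

theorem hasDerivAt_smul_self_of_continuousAt {𝕜 E : Type*} [NontriviallyNormedField 𝕜]
    [NormedAddCommGroup E] [NormedSpace 𝕜 E] {q : 𝕜 → E} (hq : ContinuousAt q 0) :
    HasDerivAt (fun ε => ε • q ε) (q 0) 0 := by
  rw [hasDerivAt_iff_tendsto_slope]
  refine (hq.tendsto.mono_left nhdsWithin_le_nhds).congr' ?_
  filter_upwards [self_mem_nhdsWithin] with ε hε
  rw [slope_def_module]
  simp [smul_smul, inv_mul_cancel₀ (show ε ≠ 0 from hε)]

section ExpVariation

variable {𝕂 𝔸 : Type*} [RCLike 𝕂] [NormedRing 𝔸] [NormedAlgebra 𝕂 𝔸] [CompleteSpace 𝔸]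

theorem HasDerivAt.exp_const_smul {a : 𝕂 → 𝔸} {a' : 𝔸} {t : 𝕂} (ha : HasDerivAt a a' t)
    (ε : 𝕂) :
    HasDerivAt (fun s => NormedSpace.exp (ε • a s)) (ε • fderiv 𝕂 NormedSpace.exp (ε • a t) a') t :=
  ((exp_analytic (ε • a t)).differentiableAt.hasFDerivAt.comp_hasDerivAt t
    (ha.const_smul ε)).congr_deriv (map_smul _ _ _)

theorem NormedSpace.contDiff_exp {n : WithTop ℕ∞} : ContDiff 𝕂 n (exp : 𝔸 → 𝔸) :=
  AnalyticOnNhd.contDiff fun x _ => exp_analytic x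

theorem hasDerivAt_exp_conj (A C : 𝔸) :
    HasDerivAt (fun ε : 𝕂 => exp (ε • -A) * C * exp (ε • A)) (C * A - A * C) 0 := by
  have := ((hasDerivAt_exp_smul_const (𝕂 := 𝕂) (-A) 0).mul_const C).mul
    (hasDerivAt_exp_smul_const (𝕂 := 𝕂) A 0)
  simp only [zero_smul, exp_zero, one_mul, mul_one] at this
  exact this.congr_deriv (by noncomm_ring)

theorem hasDerivAt_exp_neg_mul_smul_fderiv_exp (A A' : 𝔸) :
    HasDerivAt (fun ε : 𝕂 => exp (ε • -A) * (ε • fderiv 𝕂 exp (ε • A) A')) A' 0 := by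
  have hq : Continuous fun ε : 𝕂 => exp (ε • -A) * fderiv 𝕂 exp (ε • A) A' := by
    have := (contDiff_exp (𝕂 := 𝕂) (𝔸 := 𝔸) (n := 1)).continuous_fderiv one_ne_zero
    have := (contDiff_exp (𝕂 := 𝕂) (𝔸 := 𝔸) (n := 0)).continuous
    fun_prop
  simpa [hasFDerivAt_exp_zero.fderiv] using hasDerivAt_smul_self_of_continuousAt hq.continuousAt

theorem hasDerivAt_variation_body_velocity {R a D : 𝕂 → 𝔸} {W a' L : 𝔸} {t : 𝕂}
    (hR : HasDerivAt R (R t * W) t) (ha : HasDerivAt a a' t) (hL : L * R t = 1)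
    (hD : ∀ ε, HasDerivAt (fun s => R s * exp (ε • a s)) (D ε) t) :
    HasDerivAt (fun ε => exp (ε • -a t) * L * D ε) (a' + (W * a t - a t * W)) 0 := by
  have hD_eq (ε : 𝕂) : D ε = R t * (W * exp (ε • a t) + ε • fderiv 𝕂 exp (ε • a t) a') := by
    rw [(hD ε).unique (hR.mul (ha.exp_const_smul ε))]
    noncomm_ring
  refine ((hasDerivAt_exp_neg_mul_smul_fderiv_exp (a t) a').add
    (hasDerivAt_exp_conj (a t) W)).congr_of_eventuallyEq (.of_forall fun ε => ?_)
  simp only [Pi.add_apply]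
  rw [hD_eq, mul_assoc, ← mul_assoc L, hL, one_mul]
  noncomm_ring

end ExpVariation

theorem hat_add (x y : Fin 3 → ℝ) : hat (x + y) = hat x + hat y := by
  ext i j; fin_cases i <;> fin_cases j <;> simp [hat] <;> ring

theorem hat_smul (c : ℝ) (x : Fin 3 → ℝ) : hat (c • x) = c • hat x := by
  ext i j; fin_cases i <;> fin_cases j <;> simp [hat]

theorem hat_transpose (x : Fin 3 → ℝ) : (hat x)ᵀ = -hat x := by
  ext i j; fin_cases i <;> fin_cases j <;> simp [hat]

theorem hat_cross (x y : Fin 3 → ℝ) : hat (x ⨯₃ y) = hat x * hat y - hat y * hat x := by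
  ext i j; fin_cases i <;> fin_cases j <;> simp [hat, crossProduct] <;> ring

def hatLinearMap : (Fin 3 → ℝ) →ₗ[ℝ] Matrix (Fin 3) (Fin 3) ℝ where
  toFun := hat
  map_add' := hat_add
  map_smul' := hat_smul

theorem HasDerivAt.hat {η : ℝ → Fin 3 → ℝ} {η' : Fin 3 → ℝ} {t : ℝ} (h : HasDerivAt η η' t) :
    HasDerivAt (fun s => hat (η s)) (hat η') t :=
  (LinearMap.toContinuousLinearMap hatLinearMap).hasFDerivAt.comp_hasDerivAt t h

section LinftyOpNorm

/- The entrywise sup norm is not submultiplicative. The ℓ∞ operator norm is, and it induces the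
same topology, so `HasDerivAt` and `exp` mean the same under either. -/

attribute [-instance] Matrix.normedAddCommGroup Matrix.normedSpace
attribute [local instance] Matrix.linftyOpNormedRing Matrix.linftyOpNormedAlgebra

theorem hasDerivAt_variation_body_velocity_hat {R D : ℝ → Matrix (Fin 3) (Fin 3) ℝ}
    {η : ℝ → Fin 3 → ℝ} {ω η' : Fin 3 → ℝ} {t : ℝ} (hRt : (R t)ᵀ * R t = 1)
    (hR : HasDerivAt R (R t * hat ω) t) (hη : HasDerivAt η η' t)
    (hD : ∀ ε : ℝ, HasDerivAt (fun s => R s * exp (ε • hat (η s))) (D ε) t) :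
    HasDerivAt (fun ε : ℝ => (R t * exp (ε • hat (η t)))ᵀ * D ε) (hat (η' + ω ⨯₃ η t)) 0 := by
  rw [hat_add, hat_cross]
  refine (hasDerivAt_variation_body_velocity hR hη.hat hRt hD).congr_of_eventuallyEq
    (.of_forall fun ε => ?_)
  dsimp only
  rw [transpose_mul, ← exp_transpose, transpose_smul, hat_transpose]
  -- `exp_transpose` is stated for the product topology, which agrees with the norm's up to unfolding
  rfl

end LinftyOpNorm

theorem variation_of_body_angular_velocity_general (T : ℝ)
    (Ω : ℝ → Fin 3 → ℝ) (R : ℝ → Matrix (Fin 3) (Fin 3) ℝ)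
    (η η' : ℝ → Fin 3 → ℝ)
    (hSO : ∀ t ∈ Set.Icc 0 T, (R t)ᵀ * R t = 1 ∧ (R t).det = 1)
    (hR : ∀ t ∈ Set.Icc 0 T, HasDerivAt R (R t * hat (Ω t)) t)
    (hη : ∀ t ∈ Set.Icc 0 T, HasDerivAt η (η' t) t)
    (D : ℝ → ℝ → Matrix (Fin 3) (Fin 3) ℝ)
    (hD : ∀ (ε : ℝ), ∀ t ∈ Set.Icc 0 T,
      HasDerivAt (fun s => R s * NormedSpace.exp (ε • hat (η s))) (D ε t) t)
    (t : ℝ) (ht : t ∈ Set.Icc 0 T) :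
    HasDerivAt (fun ε : ℝ => (R t * NormedSpace.exp (ε • hat (η t)))ᵀ * D ε t)
      (hat (η' t + Ω t ⨯₃ η t)) 0 :=
  hasDerivAt_variation_body_velocity_hat (hSO t ht).1 (hR t ht) (hη t ht) fun ε => hD ε t ht

/-- Let `R : [0,T] → SO(3)` satisfy `Ṙ = R Ω̂` with `Ω` continuous, let `η` be
differentiable, and consider the varied curve `R^ε(t) = R(t) exp(ε η̂(t))`, whose
time derivative at each `(ε, t)` is `D ε t`.  Then the infinitesimal variation of
`Rᵀ Ṙ` satisfies `(∂/∂ε)|₀ [(R^ε(t))ᵀ ∂ₜ R^ε(t)] = (η̇(t) + Ω(t) × η(t))^`. -/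
theorem variation_of_body_angular_velocity (T : ℝ) (hT : 0 ≤ T)
    (Ω : ℝ → Fin 3 → ℝ) (R : ℝ → Matrix (Fin 3) (Fin 3) ℝ)
    (η η' : ℝ → Fin 3 → ℝ)
    (hΩ : ContinuousOn Ω (Set.Icc 0 T))
    (hSO : ∀ t ∈ Set.Icc 0 T, (R t)ᵀ * R t = 1 ∧ (R t).det = 1)
    (hR : ∀ t ∈ Set.Icc 0 T, HasDerivAt R (R t * hat (Ω t)) t)
    (hη : ∀ t ∈ Set.Icc 0 T, HasDerivAt η (η' t) t)
    (D : ℝ → ℝ → Matrix (Fin 3) (Fin 3) ℝ)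
    (hD : ∀ (ε : ℝ), ∀ t ∈ Set.Icc 0 T,
      HasDerivAt (fun s => R s * NormedSpace.exp (ε • hat (η s))) (D ε t) t)
    (t : ℝ) (ht : t ∈ Set.Icc 0 T) :
    HasDerivAt (fun ε : ℝ => (R t * NormedSpace.exp (ε • hat (η t)))ᵀ * D ε t)
      (hat (η' t + Ω t ⨯₃ η t)) 0 :=
  variation_of_body_angular_velocity_general T Ω R η η' hSO hR hη D hD t ht
end

section
/- Nonexistence of singular arcs: let J be an invertible real 3×3 matrix, Ω : [0,t_f] → ℝ³ continuous, and λ^Ω, λ^R : [0,t_f] → ℝ³ differentiable (with λ̇^Ω continuous) satisfying the multiplier equations J λ̇^Ω + J(Ω × λ^Ω) − (JΩ) × λ^Ω + λ^R = 0 and λ̇^R + Ω × λ^R = 0 on [0,t_f]. If λ^Ω vanishes identically on some nondegenerate subinterval [a,b] ⊆ [0,t_f] with a < b, then λ^Ω ≡ 0 and λ^R ≡ 0 on all of [0,t_f]; consequently, for any u : [0,t_f] → ℝ³, the transversality condition 1 + λ^Ω(t_f)·(u(t_f) − Ω(t_f) × J Ω(t_f)) + λ^R(t_f)·Ω(t_f)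 = 0 cannot hold. -/
open Matrix Set ContinuousLinearMap

/-!
On a singular arc `λ^Ω` and hence `λ̇^Ω` vanish at an interior time, so the first multiplier
equation forces `λ^R = 0` there as well. Solved for `λ̇^Ω` (this is where `J` must be
invertible), the multiplier equations form a linear ODE for `(λ^Ω, λ^R)` with coefficients
continuous in `Ω`, hence bounded on `[0, t_f]`; by uniqueness of solutions the pair vanishes
on all of `[0, t_f]`, and the left-hand side of the transversality condition reduces to `1`.
-/

theorem ODE_linear_solution_eqOn_zero_of_mem_Icc {E : Type*} [NormedAddCommGroup E]
    [NormedSpace ℝ E] {A : ℝ → E →L[ℝ] E} {f : ℝ → E} {a b t₀ : ℝ}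
    (hA : ContinuousOn A (Icc a b)) (hf : ∀ t ∈ Icc a b, HasDerivAt f (A t (f t)) t)
    (ht₀ : t₀ ∈ Ioo a b) (hf₀ : f t₀ = 0) : EqOn f 0 (Icc a b) := by
  obtain ⟨K, hK⟩ := isCompact_Icc.exists_bound_of_continuousOn hA
  have hlip (t : ℝ) (ht : t ∈ Ioo a b) : LipschitzOnWith K.toNNReal (A t) univ := by
    refine ((A t).lipschitz.weaken ?_).lipschitzOnWith
    rw [← norm_toNNReal]
    exact Real.toNNReal_le_toNNReal (hK t (Ioo_subset_Icc_self ht))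
  exact ODE_solution_unique_of_mem_Icc hlip ht₀
    (HasDerivAt.continuousOn hf) (fun t ht => hf t (Ioo_subset_Icc_self ht))
    (fun _ _ => mem_univ _) continuousOn_const
    (fun t _ => by simp) (fun _ _ => mem_univ _) hf₀

noncomputable def crossProductCLM : (Fin 3 → ℝ) →L[ℝ] (Fin 3 → ℝ) →L[ℝ] (Fin 3 → ℝ) :=
  LinearMap.toContinuousLinearMap (LinearMap.toContinuousLinearMap.toLinearMap ∘ₗ crossProduct)

/-- The right-hand side of the multiplier equations, solved for `(λ̇^Ω, λ̇^R)`, at angular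
velocity `ω`. -/
noncomputable def costateGenerator (J : Matrix (Fin 3) (Fin 3) ℝ) (ω : Fin 3 → ℝ) :
    ((Fin 3 → ℝ) × (Fin 3 → ℝ)) →L[ℝ] ((Fin 3 → ℝ) × (Fin 3 → ℝ)) :=
  let Jinv := (mulVecLin J⁻¹).toContinuousLinearMap
  ((-crossProductCLM ω + Jinv ∘L crossProductCLM (J *ᵥ ω)) ∘L fst ℝ _ _ - Jinv ∘L snd ℝ _ _).prod
    (-crossProductCLM ω ∘L snd ℝ _ _)

theorem costateGenerator_apply (J : Matrix (Fin 3) (Fin 3) ℝ) (ω : Fin 3 → ℝ)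
    (y : (Fin 3 → ℝ) × (Fin 3 → ℝ)) :
    costateGenerator J ω y =
      (-(ω ⨯₃ y.1) + J⁻¹ *ᵥ ((J *ᵥ ω) ⨯₃ y.1) - J⁻¹ *ᵥ y.2, -(ω ⨯₃ y.2)) :=
  rfl

theorem continuous_costateGenerator (J : Matrix (Fin 3) (Fin 3) ℝ) :
    Continuous (costateGenerator J) :=
  (prodₗᵢ ℝ).continuous.comp (f := fun ω => (_, _)) (by fun_prop)

theorem eq_costateGenerator_fst {J : Matrix (Fin 3) (Fin 3) ℝ} (hJ : IsUnit J)
    {ω l l' r : Fin 3 → ℝ} (h : J *ᵥ l' + J *ᵥ (ω ⨯₃ l) - (J *ᵥ ω) ⨯₃ l + r = 0) :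
    l' = (costateGenerator J ω (l, r)).1 := by
  apply mulVec_injective_iff_isUnit.mpr hJ
  simp only [costateGenerator_apply, mulVec_add, mulVec_sub, mulVec_neg, mulVec_mulVec,
    mul_nonsing_inv J ((isUnit_iff_isUnit_det J).mp hJ), one_mulVec]
  linear_combination (norm := module) h

theorem hasDerivAt_costate {J : Matrix (Fin 3) (Fin 3) ℝ} (hJ : IsUnit J)
    {lΩ lR : ℝ → Fin 3 → ℝ} {ω lΩ' : Fin 3 → ℝ} {t : ℝ}
    (hlΩ : HasDerivAt lΩ lΩ' t) (hlR : HasDerivAt lR (-(ω ⨯₃ lR t)) t)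
    (h : J *ᵥ lΩ' + J *ᵥ (ω ⨯₃ lΩ t) - (J *ᵥ ω) ⨯₃ lΩ t + lR t = 0) :
    HasDerivAt (fun s => (lΩ s, lR s)) (costateGenerator J ω (lΩ t, lR t)) t := by
  convert hlΩ.prodMk hlR using 1
  exact Prod.ext (eq_costateGenerator_fst hJ h).symm rfl

theorem no_singular_arc_general (tf : ℝ) (htf : 0 ≤ tf)
    (J : Matrix (Fin 3) (Fin 3) ℝ) (hJ : IsUnit J)
    (Ω : ℝ → Fin 3 → ℝ) (lΩ lΩ' lR : ℝ → Fin 3 → ℝ)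
    (hΩ : ContinuousOn Ω (Set.Icc 0 tf))
    (hlΩ : ∀ t ∈ Set.Icc 0 tf, HasDerivAt lΩ (lΩ' t) t)
    (heq1 : ∀ t ∈ Set.Icc 0 tf,
      J *ᵥ lΩ' t + J *ᵥ (Ω t ⨯₃ lΩ t) - (J *ᵥ Ω t) ⨯₃ lΩ t + lR t = 0)
    (heq2 : ∀ t ∈ Set.Icc 0 tf, HasDerivAt lR (-(Ω t ⨯₃ lR t)) t)
    (a b : ℝ) (ha : a ∈ Set.Icc 0 tf) (hb : b ∈ Set.Icc 0 tf) (hab : a < b)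
    (hsing : ∀ t ∈ Set.Icc a b, lΩ t = 0) :
    (∀ t ∈ Set.Icc 0 tf, lΩ t = 0 ∧ lR t = 0) ∧
    ∀ u : ℝ → Fin 3 → ℝ,
      ¬ (1 + lΩ tf ⬝ᵥ (u tf - Ω tf ⨯₃ (J *ᵥ Ω tf)) + lR tf ⬝ᵥ Ω tf = 0) := by
  obtain ⟨c, hcab⟩ := nonempty_Ioo.mpr hab
  have hc : c ∈ Ioo 0 tf := ⟨ha.1.trans_lt hcab.1, hcab.2.trans_le hb.2⟩
  have hlΩ_nhds : lΩ =ᶠ[nhds c] 0 :=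
    Filter.mem_of_superset (Ioo_mem_nhds hcab.1 hcab.2) fun t ht => hsing t (Ioo_subset_Icc_self ht)
  have hlΩ'c : lΩ' c = 0 :=
    (hlΩ c (Ioo_subset_Icc_self hc)).unique ((hasDerivAt_const c 0).congr_of_eventuallyEq hlΩ_nhds)
  have hlRc : lR c = 0 := by
    simpa [hlΩ'c, hlΩ_nhds.eq_of_nhds] using heq1 c (Ioo_subset_Icc_self hc)
  have hzero : EqOn (fun t => (lΩ t, lR t)) 0 (Icc 0 tf) :=
    ODE_linear_solution_eqOn_zero_of_mem_Icc ((continuous_costateGenerator J).comp_continuousOn hΩ)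
      (fun t ht => hasDerivAt_costate hJ (hlΩ t ht) (heq2 t ht) (heq1 t ht)) hc
      (by simp [hlΩ_nhds.eq_of_nhds, hlRc])
  have hcostate (t : ℝ) (ht : t ∈ Icc 0 tf) : lΩ t = 0 ∧ lR t = 0 := Prod.mk_eq_zero.mp (hzero ht)
  refine ⟨hcostate, fun u hu => ?_⟩
  obtain ⟨hlΩtf, hlRtf⟩ := hcostate tf ⟨htf, le_rfl⟩
  simp [hlΩtf, hlRtf] at hu

/-- Nonexistence of singular arcs.  Let `J` be invertible, `Ω` continuous, and let
`λ^Ω, λ^R : [0,t_f] → ℝ³` satisfy the multiplier equations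
`J λ̇^Ω + J(Ω × λ^Ω) − (JΩ) × λ^Ω + λ^R = 0` and `λ̇^R + Ω × λ^R = 0`, with `λ̇^Ω`
continuous.  If `λ^Ω` vanishes identically on a nondegenerate subinterval
`[a,b] ⊆ [0,t_f]`, then `λ^Ω ≡ 0` and `λ^R ≡ 0` on `[0,t_f]`; consequently the
transversality condition `1 + λ^Ω(t_f)·(u(t_f) − Ω(t_f) × JΩ(t_f)) + λ^R(t_f)·Ω(t_f) = 0`
cannot hold for any control `u`. -/
theorem no_singular_arc (tf : ℝ) (htf : 0 ≤ tf)
    (J : Matrix (Fin 3) (Fin 3) ℝ) (hJ : IsUnit J)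
    (Ω : ℝ → Fin 3 → ℝ) (lΩ lΩ' lR : ℝ → Fin 3 → ℝ)
    (hΩ : ContinuousOn Ω (Set.Icc 0 tf))
    (hlΩ : ∀ t ∈ Set.Icc 0 tf, HasDerivAt lΩ (lΩ' t) t)
    (hlΩ' : ContinuousOn lΩ' (Set.Icc 0 tf))
    (heq1 : ∀ t ∈ Set.Icc 0 tf,
      J *ᵥ lΩ' t + J *ᵥ (Ω t ⨯₃ lΩ t) - (J *ᵥ Ω t) ⨯₃ lΩ t + lR t = 0)
    (heq2 : ∀ t ∈ Set.Icc 0 tf, HasDerivAt lR (-(Ω t ⨯₃ lR t)) t)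
    (a b : ℝ) (ha : a ∈ Set.Icc 0 tf) (hb : b ∈ Set.Icc 0 tf) (hab : a < b)
    (hsing : ∀ t ∈ Set.Icc a b, lΩ t = 0) :
    (∀ t ∈ Set.Icc 0 tf, lΩ t = 0 ∧ lR t = 0) ∧
    ∀ u : ℝ → Fin 3 → ℝ,
      ¬ (1 + lΩ tf ⬝ᵥ (u tf - Ω tf ⨯₃ (J *ᵥ Ω tf)) + lR tf ⬝ᵥ Ω tf = 0) :=
  no_singular_arc_general tf htf J hJ Ω lΩ lΩ' lR hΩ hlΩ heq1 heq2 a b ha hb hab hsing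
end

section
/- Let F, G ∈ SO(3) with tr(F) > 1 and tr(G) > 1 (equivalently, rotation angles strictly less than π/2). If F − Fᵀ = G − Gᵀ, then F = G. In particular, a rotation matrix whose rotation angle is less than π/2 is uniquely determined by its skew-symmetric part. -/
/-!
For an orthogonal `F`, put `P = F + Fᵀ` and `S = F - Fᵀ`; then `4 - P² = SᵀS`, so `P²` is
determined by the skew part. When moreover `det F = 1` and `tr F > 1`, `P` is positive
semidefinite: its eigenvalues are at most `2` (as `4 - P² ≥ 0`), their sum `2 tr F` exceeds `2`,
and their product `det P = det (1 + F²) = |det (1 + iF)|²` is nonnegative, which leaves no room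
for a negative eigenvalue. Positive semidefinite square roots are unique, so `P`, and with it
`F = (P + S) / 2`, is determined by `S`.
-/

open Matrix

theorem nonneg_of_lt_add_of_mul_nonneg {a b c r : ℝ} (hb : b ≤ r) (hc : c ≤ r)
    (hsum : r < a + b + c) (hprod : 0 ≤ a * b * c) : 0 ≤ a := by
  by_contra! ha
  have hbc : 0 < b * c := mul_pos (by linarith) (by linarith)
  linarith [mul_neg_of_neg_of_pos ha hbc, mul_assoc a b c]

namespace Matrix

open scoped ComplexOrder in
theorem IsHermitian.eigenvalues_sq_le {𝕜 n : Type*} [RCLike 𝕜] [Fintype n] [DecidableEq n]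
    {A : Matrix n n 𝕜} (hA : A.IsHermitian) {r : ℝ} (h : (r • 1 - A * A).PosSemidef) (i : n) :
    hA.eigenvalues i ^ 2 ≤ r := by
  set v := ⇑(hA.eigenvectorBasis i)
  have hv : (r • 1 - A * A) *ᵥ v = (r - hA.eigenvalues i ^ 2) • v := by
    rw [sub_mulVec, smul_mulVec, one_mulVec, ← mulVec_mulVec, hA.mulVec_eigenvectorBasis,
      mulVec_smul, hA.mulVec_eigenvectorBasis, smul_smul, sub_smul, sq]
  have hunit : star v ⬝ᵥ v = 1 := by
    rw [dotProduct_comm, ← EuclideanSpace.inner_eq_star_dotProduct, inner_self_eq_norm_sq_to_K,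
      hA.eigenvectorBasis.orthonormal.1 i, RCLike.ofReal_one, one_pow]
  have hnonneg := h.re_dotProduct_nonneg v
  rw [hv, dotProduct_smul, hunit, RCLike.smul_re, RCLike.one_re, mul_one] at hnonneg
  linarith

open scoped ComplexOrder MatrixOrder Norms.L2Operator in
theorem PosSemidef.eq_of_mul_self_eq {𝕜 n : Type*} [RCLike 𝕜] [Fintype n] [DecidableEq n]
    {A B : Matrix n n 𝕜} (hA : A.PosSemidef) (hB : B.PosSemidef) (h : A * A = B * B) :
    A = B :=
  (CFC.sq_eq_sq_iff A B hA.nonneg hB.nonneg).mp (by rwa [sq, sq])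

theorem IsHermitian.posSemidef_of_lt_trace_of_det_nonneg {P : Matrix (Fin 3) (Fin 3) ℝ}
    (hP : P.IsHermitian) {c : ℝ} (hc : 0 ≤ c) (hbound : (c ^ 2 • 1 - P * P).PosSemidef)
    (htr : c < P.trace) (hdet : 0 ≤ P.det) : P.PosSemidef := by
  have hle (i : Fin 3) : hP.eigenvalues i ≤ c :=
    le_of_sq_le_sq (hP.eigenvalues_sq_le hbound i) hc
  rw [hP.trace_eq_sum_eigenvalues, Fin.sum_univ_three] at htr
  rw [hP.det_eq_prod_eigenvalues, Fin.prod_univ_three] at hdet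
  simp only [RCLike.ofReal_real_eq_id, id] at htr hdet
  rw [hP.posSemidef_iff_eigenvalues_nonneg]
  intro i
  fin_cases i
  · exact nonneg_of_lt_add_of_mul_nonneg (hle 1) (hle 2) htr hdet
  · exact nonneg_of_lt_add_of_mul_nonneg (a := hP.eigenvalues 1) (hle 0) (hle 2) (by linarith)
      (by linarith)
  · exact nonneg_of_lt_add_of_mul_nonneg (a := hP.eigenvalues 2) (hle 0) (hle 1) (by linarith)
      (by linarith)

section Orthogonal

variable {n : Type*} [Fintype n] [DecidableEq n]

theorem det_one_add_mul_self_nonneg (M : Matrix n n ℝ) : 0 ≤ (1 + M * M).det := by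
  set N := Complex.ofRealHom.mapMatrix M
  have hfactor : (1 + Complex.I • N) * (1 - Complex.I • N) = 1 + N * N := by
    simp only [mul_sub, add_mul, one_mul, mul_one, smul_mul_smul_comm, Complex.I_mul_I,
      neg_one_smul]
    abel
  have hconj : (1 - Complex.I • N).det = starRingEnd ℂ (1 + Complex.I • N).det := by
    rw [RingHom.map_det, RingHom.mapMatrix_apply]
    congr 1
    ext i j
    simp [N, one_apply, apply_ite, sub_eq_add_neg]
  have hnormSq : (1 + M * M).det = Complex.normSq (1 + Complex.I • N).det := by
    apply Complex.ofReal_injective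
    rw [← Complex.mul_conj, ← hconj, ← det_mul, hfactor, ← Complex.ofRealHom_eq_coe,
      RingHom.map_det, map_add, map_one, map_mul]
  exact hnormSq ▸ Complex.normSq_nonneg _

variable {F : Matrix n n ℝ}

theorem four_smul_one_sub_add_transpose_mul_self (hF : Fᵀ * F = 1) :
    (4 : ℝ) • 1 - (F + Fᵀ) * (F + Fᵀ) = (F - Fᵀ)ᵀ * (F - Fᵀ) := by
  have hF' : F * Fᵀ = 1 := mul_eq_one_comm.mp hF
  simp only [transpose_sub, transpose_transpose, add_mul, mul_add, sub_mul, mul_sub, hF, hF']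
  module

theorem det_add_transpose_nonneg (hF : Fᵀ * F = 1) (hdet : 0 ≤ F.det) : 0 ≤ (F + Fᵀ).det := by
  have hfactor : F + Fᵀ = Fᵀ * (1 + F * F) := by
    rw [mul_add, mul_one, ← mul_assoc, hF, one_mul, add_comm]
  rw [hfactor, det_mul, det_transpose]
  exact mul_nonneg hdet (det_one_add_mul_self_nonneg F)

end Orthogonal

theorem posSemidef_add_transpose_of_one_lt_trace {F : Matrix (Fin 3) (Fin 3) ℝ}
    (hF : Fᵀ * F = 1) (hdet : 0 ≤ F.det) (htr : 1 < F.trace) : (F + Fᵀ).PosSemidef := by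
  have hP : (F + Fᵀ).IsHermitian := isHermitian_iff_isSymm.mpr (isSymm_add_transpose_self F)
  refine hP.posSemidef_of_lt_trace_of_det_nonneg zero_le_two ?_ ?_
    (det_add_transpose_nonneg hF hdet)
  · rw [show (2 : ℝ) ^ 2 = 4 by norm_num, four_smul_one_sub_add_transpose_mul_self hF]
    simpa using posSemidef_conjTranspose_mul_self (F - Fᵀ)
  · rw [trace_add, trace_transpose]
    linarith

end Matrix

/-- A rotation matrix in `SO(3)` with trace greater than `1` (equivalently,
rotation angle less than `π/2`) is uniquely determined by its skew-symmetric
part: if `F, G ∈ SO(3)`, `tr F > 1`, `tr G > 1` and `F − Fᵀ = G − Gᵀ`, then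
`F = G`. -/
theorem rotation_determined_by_skew_part (F G : Matrix (Fin 3) (Fin 3) ℝ)
    (hF : Fᵀ * F = 1) (hFdet : F.det = 1) (hFtr : 1 < F.trace)
    (hG : Gᵀ * G = 1) (hGdet : G.det = 1) (hGtr : 1 < G.trace)
    (hskew : F - Fᵀ = G - Gᵀ) : F = G := by
  have hFpsd := posSemidef_add_transpose_of_one_lt_trace hF (hFdet ▸ zero_le_one) hFtr
  have hGpsd := posSemidef_add_transpose_of_one_lt_trace hG (hGdet ▸ zero_le_one) hGtr
  have hsym : F + Fᵀ = G + Gᵀ := by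
    refine hFpsd.eq_of_mul_self_eq hGpsd ?_
    rw [← sub_right_inj, four_smul_one_sub_add_transpose_mul_self hF,
      four_smul_one_sub_add_transpose_mul_self hG, hskew]
  have htwice : F + F = G + G :=
    calc F + F = (F + Fᵀ) + (F - Fᵀ) := (add_add_sub_cancel F F Fᵀ).symm
      _ = (G + Gᵀ) + (G - Gᵀ) := by rw [hsym, hskew]
      _ = G + G := add_add_sub_cancel G G Gᵀ
  simpa [← two_smul ℝ] using htwice
end
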